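/- arXiv:math/0306334 — 7 statements merged into one kernel-verified Lean document; each statement's English description precedes it below -/
import Mathlib

section
/- Let N be a right near-ring. Then every homomorphic image of N has the insertion of factors property — that is, for every right near-ring M and every surjective map f : N → M satisfying f(x + y) = f(x) + f(y) and f(x * y) = f(x) * f(y) for all x, y ∈ N, the structure M satisfies: a * b = 0 implies a * m * b = 0 for all a, b, m ∈ M — if and only if for every ideal I of N and all a, b, n ∈ N, a * b ∈ I implies a * n * b ∈ I. -/
/-!
An ideal `I` is exactly the zero set of a surjective near-ring homomorphism, namely of the
projection `N → N ⧸ I` (the ideal axioms are what makes the product well defined on cosets).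
Hence the insertion-of-factors property of all homomorphic images of `N` is the same statement
as the property `a * b ∈ I → a * n * b ∈ I` for all ideals `I`.
-/

universe u

/-- An ideal of a right near-ring `N`. -/
def IsNearRingIdeal {N : Type*} [AddGroup N] [Mul N] (I : Set N) : Prop :=
  (0 : N) ∈ I ∧
  (∀ a b : N, a ∈ I → b ∈ I → a + b ∈ I) ∧
  (∀ a : N, a ∈ I → -a ∈ I) ∧
  (∀ x i : N, i ∈ I → x + i - x ∈ I) ∧
  (∀ i n : N, i ∈ I → i * n ∈ I) ∧
  (∀ n m i : N, i ∈ I → n * (m + i) - n * m ∈ I)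

theorem zero_mul_of_rightDistribClass {M : Type*} [AddGroup M] [Mul M] [RightDistribClass M]
    (x : M) : 0 * x = 0 := by
  have h : (0 + 0 : M) * x = 0 * x + 0 * x := add_mul 0 0 x
  rwa [add_zero, left_eq_add] at h

theorem isNearRingIdeal_setOf_map_eq_zero {N M : Type*} [AddGroup N] [Mul N] [AddGroup M]
    [Mul M] [RightDistribClass M] (f : N →+ M) (hmul : ∀ x y : N, f (x * y) = f x * f y) :
    IsNearRingIdeal {x : N | f x = 0} := by
  refine ⟨map_zero f, ?_, ?_, ?_, ?_, ?_⟩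
  · intro p q hp hq
    simp_all
  · intro p hp
    simp_all
  · intro x i hi
    simp_all [sub_eq_add_neg]
  · intro i n hi
    rw [Set.mem_ofPred_eq, hmul, show f i = 0 from hi, zero_mul_of_rightDistribClass]
  · intro n m i hi
    simp_all

namespace IsNearRingIdeal

variable {N : Type*} [AddGroup N] [Mul N] {I : Set N}

def toAddSubgroup (hI : IsNearRingIdeal I) : AddSubgroup N where
  carrier := I
  zero_mem' := hI.1
  add_mem' := hI.2.1 _ _
  neg_mem' := hI.2.2.1 _

theorem toAddSubgroup_normal (hI : IsNearRingIdeal I) : hI.toAddSubgroup.Normal :=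
  ⟨fun i hi x => by show x + i + -x ∈ I; simpa [sub_eq_add_neg] using hI.2.2.2.1 x i hi⟩

theorem neg_mul_add_mul_mem [RightDistribClass N] (hI : IsNearRingIdeal I) {a₁ a₂ b₁ b₂ : N}
    (ha : -a₁ + a₂ ∈ I) (hb : -b₁ + b₂ ∈ I) : -(a₁ * b₁) + a₂ * b₂ ∈ I := by
  obtain ⟨-, hadd, -, hnormal, hmul_right, hmul_left⟩ := hI
  set i := -a₁ + a₂
  set j := -b₁ + b₂
  have hprod : a₂ * b₂ = a₁ * (b₁ + j) + i * (b₁ + j) := by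
    rw [← add_mul]; simp [i, j]
  -- The two summands of `hprod` differ from `a₁ * b₁` and from `0` by elements of `I`.
  have hsub : a₂ * b₂ - a₁ * b₁ ∈ I := by
    have hsplit : a₂ * b₂ - a₁ * b₁ =
        (a₁ * (b₁ + j) + i * (b₁ + j) - a₁ * (b₁ + j)) + (a₁ * (b₁ + j) - a₁ * b₁) := by
      rw [hprod]; simp [sub_eq_add_neg, add_assoc]
    rw [hsplit]
    exact hadd _ _ (hnormal _ _ (hmul_right _ _ ha)) (hmul_left _ _ _ hb)
  simpa [sub_eq_add_neg, ← add_assoc] using hnormal (-(a₁ * b₁)) _ hsub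

end IsNearRingIdeal

theorem IsNearRingIdeal.exists_surjective_setOf_map_eq_zero {N : Type u} [AddGroup N]
    [Semigroup N] [RightDistribClass N] {I : Set N} (hI : IsNearRingIdeal I) :
    ∃ (M : Type u) (_ : AddGroup M) (_ : Semigroup M) (_ : RightDistribClass M) (f : N →+ M),
      Function.Surjective f ∧ (∀ x y : N, f (x * y) = f x * f y) ∧ ∀ x : N, f x = 0 ↔ x ∈ I := by
  have := hI.toAddSubgroup_normal
  let Q := N ⧸ hI.toAddSubgroup
  let _ : Mul Q := ⟨fun x y => Quotient.liftOn₂' x y (fun p q => ((p * q : N) : Q))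
    fun _ _ _ _ ha hb => Quotient.sound' <| by
      rw [QuotientAddGroup.leftRel_apply] at ha hb ⊢
      exact hI.neg_mul_add_mul_mem ha hb⟩
  let _ : Semigroup Q :=
    { mul_assoc := fun x y z => Quotient.inductionOn₃' x y z fun p q r =>
        congrArg QuotientAddGroup.mk (mul_assoc p q r) }
  have : RightDistribClass Q :=
    ⟨fun x y z => Quotient.inductionOn₃' x y z fun p q r =>
      congrArg QuotientAddGroup.mk (add_mul p q r)⟩
  exact ⟨Q, inferInstance, inferInstance, this, QuotientAddGroup.mk' _,
    QuotientAddGroup.mk_surjective, fun _ _ => rfl, QuotientAddGroup.eq_zero_iff⟩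

theorem stmt_0 {N : Type} [AddGroup N] [Semigroup N] [RightDistribClass N] :
    (∀ (M : Type) [AddGroup M] [Semigroup M] [RightDistribClass M] (f : N → M),
        Function.Surjective f →
        (∀ x y : N, f (x + y) = f x + f y) →
        (∀ x y : N, f (x * y) = f x * f y) →
        ∀ a b m : M, a * b = 0 → a * m * b = 0) ↔
    (∀ I : Set N, IsNearRingIdeal I → ∀ a b n : N, a * b ∈ I → a * n * b ∈ I) := by
  constructor
  · intro h I hI a b n hab
    obtain ⟨M, _, _, _, f, hsurj, hmul, hker⟩ := hI.exists_surjective_setOf_map_eq_zero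
    have := h M f hsurj (map_add f) hmul (f a) (f b) (f n) (by rw [← hmul, hker]; exact hab)
    rwa [← hmul, ← hmul, hker] at this
  · intro h M _ _ _ f hsurj hadd hmul a b m hab
    let F : N →+ M := AddMonoidHom.mk' f hadd
    obtain ⟨a, rfl⟩ := hsurj a
    obtain ⟨b, rfl⟩ := hsurj b
    obtain ⟨m, rfl⟩ := hsurj m
    have := h _ (isNearRingIdeal_setOf_map_eq_zero F hmul) a b m (by simpa [F, hmul] using hab)
    simpa [F, hmul] using this
end

section
/- Let N be a right near-ring. The following are equivalent: (a) N has the insertion of factors property, i.e., a * b = 0 implies a * n * b = 0 for all a, b, n ∈ N; (b) for every n ∈ N, the annihilator (0 : n) = {x ∈ N | x * n = 0} is an ideal of N; (c) for every subset S ⊆ N, the annihilator (0 : S) = {x ∈ N | x * s = 0 for all s ∈ S} is an ideal of N. -/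
private lemma nr_zero_mul {N : Type*} [AddGroup N] [Mul N] [RightDistribClass N] (a : N) :
    (0 : N) * a = 0 := by
  have h : (0 : N) * a + 0 * a = 0 * a + 0 := by
    rw [← add_mul, add_zero, add_zero]
  exact add_left_cancel h

private lemma nr_neg_mul {N : Type*} [AddGroup N] [Mul N] [RightDistribClass N] (a b : N) :
    (-a) * b = -(a * b) := by
  have h : (-a) * b + a * b = 0 := by rw [← add_mul, neg_add_cancel, nr_zero_mul]
  exact eq_neg_of_add_eq_zero_left h

theorem stmt_1 {N : Type*} [AddGroup N] [Semigroup N] [RightDistribClass N] :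
    List.TFAE
      [∀ a b n : N, a * b = 0 → a * n * b = 0,
       ∀ n : N, IsNearRingIdeal {x : N | x * n = 0},
       ∀ S : Set N, IsNearRingIdeal {x : N | ∀ s ∈ S, x * s = 0}] := by
  tfae_have 1 → 3 := by
    intro h S
    refine ⟨fun s _ => nr_zero_mul s, ?_, ?_, ?_, ?_, ?_⟩
    · intro a b ha hb s hs
      rw [add_mul, ha s hs, hb s hs, add_zero]
    · intro a ha s hs
      rw [nr_neg_mul, ha s hs, neg_zero]
    · intro x i hi s hs
      rw [sub_eq_add_neg, add_mul, add_mul, hi s hs, add_zero, nr_neg_mul,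
        add_neg_cancel]
    · intro i n hi s hs
      exact h i s n (hi s hs)
    · intro n m i hi s hs
      have : (m + i) * s = m * s := by rw [add_mul, hi s hs, add_zero]
      rw [sub_eq_add_neg, add_mul, nr_neg_mul, mul_assoc, this, ← mul_assoc,
        add_neg_cancel]
  tfae_have 3 → 2 := by
    intro h n
    have := h {n}
    simpa using this
  tfae_have 2 → 1 := by
    intro h a b n hab
    exact (h b).2.2.2.2.1 a n hab
  tfae_finish
end

section
/- Let N be a right near-ring that is left self-distributive, i.e., a * b * c = a * b * a * c for all a, b, c ∈ N. Then: (i) for all a, b, c ∈ N and every natural number n ≥ 1, a * b * c = a * b * aⁿ * c, where aⁿ denotes the n-fold product a * ⋯ * a in the multiplicative semigroup; (ii) for every a ∈ N, aⁿ = a³ for all n ≥ 3, and a³ is idempotent, i.e., (a * a * a) * (a * a * a) = a * a * a; (iii) if moreover b * 0 = 0 for all b ∈ N, then a * b * c = 0 implies b * a * c = 0. -/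
/-- `npowS a n` is the `n`-fold product `a * a * ⋯ * a` (for `n ≥ 1`;
we set `npowS a 0 = a` as a junk value). -/
def npowS {N : Type*} [Mul N] (a : N) : ℕ → N
  | 0 => a
  | 1 => a
  | n + 2 => npowS a (n + 1) * a

theorem stmt_2 {N : Type*} [AddGroup N] [Semigroup N] [RightDistribClass N]
    (hlsd : ∀ a b c : N, a * b * c = a * b * a * c) :
    (∀ (a b c : N) (n : ℕ), 1 ≤ n → a * b * c = a * b * npowS a n * c) ∧
    (∀ (a : N) (n : ℕ), 3 ≤ n → npowS a n = npowS a 3) ∧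
    (∀ a : N, a * a * a * (a * a * a) = a * a * a) ∧
    ((∀ b : N, b * 0 = 0) → ∀ a b c : N, a * b * c = 0 → b * a * c = 0) := by
  have key : ∀ (a b : N) (n : ℕ), 1 ≤ n → ∀ c : N, a * b * c = a * b * npowS a n * c := by
    intro a b n hn
    induction n, hn using Nat.le_induction with
    | base => intro c; simpa [npowS] using hlsd a b c
    | succ n hn ih =>
      intro c
      have hs : npowS a (n + 1) = npowS a n * a := by
        cases n with
        | zero => omega
        | succ m => rfl
      calc a * b * c = a * b * (a * c) := by rw [hlsd]; rw [mul_assoc]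
        _ = a * b * npowS a n * (a * c) := ih (a * c)
        _ = a * b * npowS a (n + 1) * c := by rw [hs]; simp [mul_assoc]
  have h43 : ∀ a : N, npowS a 4 = npowS a 3 := by
    intro a
    show a * a * a * a = a * a * a
    exact (hlsd a a a).symm
  have pow3 : ∀ (a : N) (n : ℕ), 3 ≤ n → npowS a n = npowS a 3 := by
    intro a n hn
    induction n, hn using Nat.le_induction with
    | base => rfl
    | succ n hn ih =>
      have hs : npowS a (n + 1) = npowS a n * a := by
        cases n with
        | zero => omega
        | succ m => rfl
      rw [hs, ih]
      exact h43 a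
  refine ⟨fun a b c n hn => key a b n hn c, pow3, ?_, ?_⟩
  · intro a
    have h := (hlsd a a a).symm
    calc a * a * a * (a * a * a) = a * a * a * a * a * a := by simp [mul_assoc]
      _ = a * a * a := by rw [h, h, h]
  · intro h0 a b c habc
    have : b * a * c = b * (a * b * c) := by
      rw [hlsd]; simp [mul_assoc]
    rw [this, habc, h0 b]
end

section
/- Let G be a group and x ∈ MonoidAlgebra (ZMod 2) G. If x is right quasi-regular, i.e., there exists y ∈ MonoidAlgebra (ZMod 2) G with x + y − x * y = 0, then the support of x has an even number of elements. -/
/-! The augmentation `k[G] → k`, `g ↦ 1`, is a ring homomorphism, so it sends a quasi-regular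
element to a quasi-regular element of `ZMod 2`, and `0` is the only such element there.
Over `ZMod 2` the augmentation of `x` is the sum of its nonzero coefficients, all equal to `1`,
i.e. the cardinality of the support of `x` read modulo `2`. -/

theorem ZMod.eq_zero_of_add_sub_mul_eq_zero {a b : ZMod 2} (h : a + b - a * b = 0) : a = 0 := by
  revert a b
  decide

theorem Finsupp.sum_id_eq_card_support {α : Type*} (f : α →₀ ZMod 2) :
    (f.sum fun _ a => a) = f.support.card := by
  have eq_one_of_ne_zero : ∀ a : ZMod 2, a ≠ 0 → a = 1 := by decide
  rw [Finsupp.sum, Finset.card_eq_sum_ones, Nat.cast_sum, Nat.cast_one]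
  exact Finset.sum_congr rfl fun g hg => eq_one_of_ne_zero _ (Finsupp.mem_support_iff.mp hg)

theorem MonoidAlgebra.lift_one_apply {k G : Type*} [CommSemiring k] [Monoid G]
    (x : MonoidAlgebra k G) : MonoidAlgebra.lift k k G 1 x = x.coeff.sum fun _ a => a := by
  simp [MonoidAlgebra.lift_apply]

theorem stmt_12 {G : Type*} [Group G] (x : MonoidAlgebra (ZMod 2) G)
    (hx : ∃ y : MonoidAlgebra (ZMod 2) G, x + y - x * y = 0) :
    Even (Finsupp.support x.coeff).card := by
  obtain ⟨y, hy⟩ := hx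
  set ε := MonoidAlgebra.lift (ZMod 2) (ZMod 2) G 1
  have hεy : ε x + ε y - ε x * ε y = 0 := by
    simpa only [map_sub, map_add, map_mul, map_zero] using congrArg ε hy
  rw [← ZMod.natCast_eq_zero_iff_even, ← Finsupp.sum_id_eq_card_support,
    ← MonoidAlgebra.lift_one_apply]
  exact ZMod.eq_zero_of_add_sub_mul_eq_zero hεy
end

section
/- Let N be a right near-ring and μ : N → ℝ a function with 0 ≤ μ(x) ≤ 1 for all x ∈ N. For t ∈ ℝ let μ_t := {x ∈ N | μ(x) ≥ t} denote the level subset. Then μ is a fuzzy ideal of N if and only if for every t ∈ [0, 1], whenever the level subset μ_t is nonempty it is an ideal of N. -/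
/-- A fuzzy ideal of a right near-ring `N`. -/
def IsFuzzyIdeal {N : Type*} [AddGroup N] [Mul N] (μ : N → ℝ) : Prop :=
  (∀ x : N, 0 ≤ μ x ∧ μ x ≤ 1) ∧
  (∀ x y : N, min (μ x) (μ y) ≤ μ (x + y)) ∧
  (∀ x : N, μ (-x) = μ x) ∧
  (∀ x y : N, μ x = μ (y + x - y)) ∧
  (∀ x y : N, μ x ≤ μ (x * y)) ∧
  (∀ x y i : N, μ i ≤ μ (x * (y + i) - x * y))

theorem stmt_15 {N : Type*} [AddGroup N] [Semigroup N] [RightDistribClass N]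
    (μ : N → ℝ) (hbd : ∀ x : N, 0 ≤ μ x ∧ μ x ≤ 1) :
    IsFuzzyIdeal μ ↔
      ∀ t ∈ Set.Icc (0 : ℝ) 1,
        ({x : N | t ≤ μ x}).Nonempty → IsNearRingIdeal {x : N | t ≤ μ x} := by
  constructor
  · rintro ⟨_, hadd, hneg, hconj, hmul, hdist⟩ t ht ⟨w, hw⟩
    refine ⟨?_, ?_, ?_, ?_, ?_, ?_⟩
    · show t ≤ μ 0
      calc t ≤ μ w := hw
        _ ≤ μ 0 := by
          have := hadd w (-w)
          rw [hneg] at this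
          simpa using this
    · intro a b ha hb
      exact le_trans (le_min ha hb) (hadd a b)
    · intro a ha
      exact ha.trans_eq (hneg a).symm
    · intro x i hi
      exact hi.trans_eq (hconj i x)
    · intro i n hi
      exact hi.trans (hmul i n)
    · intro n m i hi
      exact hi.trans (hdist n m i)
  · intro h
    have key : ∀ x : N, ({y : N | μ x ≤ μ y}).Nonempty → IsNearRingIdeal {y : N | μ x ≤ μ y} :=
      fun x => h (μ x) ⟨(hbd x).1, (hbd x).2⟩
    refine ⟨hbd, ?_, ?_, ?_, ?_, ?_⟩
    · intro x y
      rcases min_cases (μ x) (μ y) with ⟨hm, hxy⟩ | ⟨hm, hxy⟩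
      · have := (key x ⟨x, Set.mem_setOf.mpr le_rfl⟩).2.1 x y (Set.mem_setOf.mpr le_rfl) hxy
        rw [hm]; exact this
      · have := (key y ⟨y, Set.mem_setOf.mpr le_rfl⟩).2.1 x y hxy.le (Set.mem_setOf.mpr le_rfl)
        rw [hm]; exact this
    · intro x
      have h1 : μ x ≤ μ (-x) := (key x ⟨x, Set.mem_setOf.mpr le_rfl⟩).2.2.1 x (Set.mem_setOf.mpr le_rfl)
      have h2 : μ (-x) ≤ μ (-(-x)) := (key (-x) ⟨-x, Set.mem_setOf.mpr le_rfl⟩).2.2.1 (-x) (Set.mem_setOf.mpr le_rfl)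
      rw [neg_neg] at h2
      exact le_antisymm h2 h1
    · intro x y
      have h1 : μ x ≤ μ (y + x - y) := (key x ⟨x, Set.mem_setOf.mpr le_rfl⟩).2.2.2.1 y x (Set.mem_setOf.mpr le_rfl)
      have h2 : μ (y + x - y) ≤ μ (-y + (y + x - y) - -y) :=
        (key (y + x - y) ⟨_, Set.mem_setOf.mpr le_rfl⟩).2.2.2.1 (-y) _ (Set.mem_setOf.mpr le_rfl)
      have : -y + (y + x - y) - -y = x := by simp [sub_eq_add_neg, add_assoc]
      rw [this] at h2
      exact le_antisymm h1 h2
    · intro x y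
      exact (key x ⟨x, Set.mem_setOf.mpr le_rfl⟩).2.2.2.2.1 x y (Set.mem_setOf.mpr le_rfl)
    · intro x y i
      exact (key i ⟨i, Set.mem_setOf.mpr le_rfl⟩).2.2.2.2.2 x y i (Set.mem_setOf.mpr le_rfl)
end

section
/- Let N be a right near-ring and μ a fuzzy ideal of N having the fuzzy insertion of factors property, i.e., μ(a * n * b) ≥ μ(a * b) for all a, b, n ∈ N. Then N_μ := {x ∈ N | μ(x) = μ(0)} is an ideal of N, and N_μ has the insertion property: a * b ∈ N_μ implies a * n * b ∈ N_μ for all n ∈ N. -/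
theorem stmt_16 {N : Type*} [AddGroup N] [Semigroup N] [RightDistribClass N]
    (μ : N → ℝ) (hμ : IsFuzzyIdeal μ)
    (hIFP : ∀ a b n : N, μ (a * b) ≤ μ (a * n * b)) :
    IsNearRingIdeal {x : N | μ x = μ 0} ∧
    ∀ a b n : N, μ (a * b) = μ 0 → μ (a * n * b) = μ 0 := by
  obtain ⟨hb, hadd, hneg, hnorm, hmul, hquasi⟩ := hμ
  have hmax : ∀ x : N, μ x ≤ μ 0 := fun x => by
    have h := hadd x (-x)
    rw [hneg, min_self, add_neg_cancel] at h
    exact h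
  have hmem : ∀ x : N, μ 0 ≤ μ x → μ x = μ 0 := fun x h => le_antisymm (hmax x) h
  refine ⟨⟨rfl, ?_, ?_, ?_, ?_, ?_⟩, ?_⟩
  · intro a b ha hb'
    exact hmem _ (by calc μ 0 = min (μ a) (μ b) := by rw [ha, hb', min_self]
                        _ ≤ μ (a + b) := hadd a b)
  · intro a ha; exact (hneg a).trans ha
  · intro x i hi; exact ((hnorm i x).symm.trans hi)
  · intro i n hi; exact hmem _ (hi ▸ hmul i n)
  · intro n m i hi; exact hmem _ (hi ▸ hquasi n m i)
  · intro a b n h; exact hmem _ (h ▸ hIFP a b n)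
end

section
/- Let M and M' be additive groups (not necessarily commutative), h : M → M' an additive homomorphism, and μ : M → ℝ a function taking values in [0, 1] such that μ(x + y) ≥ min(μ(x), μ(y)) and μ(−x) = μ(x) for all x, y ∈ M, and such that μ is constant on the kernel of h, i.e., μ(k) = μ(0) whenever h(k) = 0. Then μ is constant on the fibers of h: h(x) = h(y) implies μ(x) = μ(y). Consequently h⁻¹(h(μ)) = μ, i.e., for every x ∈ M, sup{μ(x') | x' ∈ M, h(x') = h(x)} = μ(x). -/
theorem stmt_19 {M M' : Type*} [AddGroup M] [AddGroup M'] (h : M → M')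
    (hadd : ∀ x y : M, h (x + y) = h x + h y)
    (μ : M → ℝ) (hbd : ∀ x : M, 0 ≤ μ x ∧ μ x ≤ 1)
    (hmin : ∀ x y : M, min (μ x) (μ y) ≤ μ (x + y))
    (hneg : ∀ x : M, μ (-x) = μ x)
    (hker : ∀ k : M, h k = 0 → μ k = μ 0) :
    (∀ x y : M, h x = h y → μ x = μ y) ∧
    (∀ x : M, sSup (μ '' {x' : M | h x' = h x}) = μ x) := by
  have h0 : h 0 = 0 := by
    have := hadd 0 0
    simp only [add_zero] at this
    exact (left_eq_add.mp this)
  have hnegh : ∀ x : M, h (-x) = -h x := by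
    intro x
    have : h x + h (-x) = 0 := by rw [← hadd, add_neg_cancel, h0]
    exact (neg_eq_of_add_eq_zero_right this).symm
  have hμ0 : ∀ x : M, μ x ≤ μ 0 := by
    intro x
    have := hmin x (-x)
    rw [hneg, min_self, add_neg_cancel] at this
    exact this
  have key : ∀ x y : M, h x = h y → μ x = μ y := by
    have half : ∀ x y : M, h x = h y → μ y ≤ μ x := by
      intro x y hxy
      have hk : h (x + -y) = 0 := by rw [hadd, hnegh, hxy, add_neg_cancel]
      have hμk : μ (x + -y) = μ 0 := hker _ hk
      have := hmin (x + -y) y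
      rw [hμk, add_assoc, neg_add_cancel, add_zero] at this
      calc μ y = min (μ 0) (μ y) := (min_eq_right (hμ0 y)).symm
        _ ≤ μ x := this
    exact fun x y hxy => le_antisymm (half y x hxy.symm) (half x y hxy)
  refine ⟨key, fun x => ?_⟩
  have himg : μ '' {x' : M | h x' = h x} = {μ x} := by
    ext r
    simp only [Set.mem_image, Set.mem_setOf_eq, Set.mem_singleton_iff]
    constructor
    · rintro ⟨x', hx', rfl⟩; exact key x' x hx'
    · rintro rfl; exact ⟨x, rfl, rfl⟩
  rw [himg, csSup_singleton]
end
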